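/- The curried TRS R° is confluent if and only if F ∪ E^± is confluent, where (R♭, E) is the flattening of R° and F its rewrite closure. -/
import Mathlib


/-- Curried terms: constants from `F` plus a single binary application symbol `∘`. -/
inductive CTerm (F : Type) : Type
  | const : F → CTerm F
  | app : CTerm F → CTerm F → CTerm F

/-- Ground rewriting of curried terms: closure of the rules under contexts. -/
inductive CRew {F : Type} (R : Set (CTerm F × CTerm F)) : CTerm F → CTerm F → Prop
  | rule {l r} : (l, r) ∈ R → CRew R l r
  | appl {s t u} : CRew R s t → CRew R (.app s u) (.app t u)
  | appr {s t u} : CRew R s t → CRew R (.app u s) (.app u t)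

/-- The (reflexive) subterm relation. -/
inductive Subt {F : Type} : CTerm F → CTerm F → Prop
  | refl (t) : Subt t t
  | appl {s t u} : Subt s t → Subt s (.app t u)
  | appr {s t u} : Subt s t → Subt s (.app u t)

/-- `s` is a subterm of (a side of a rule of) the TRS `R`. -/
def SubR {F : Type} (R : Set (CTerm F × CTerm F)) (s : CTerm F) : Prop :=
  ∃ l r, (l, r) ∈ R ∧ (Subt s l ∨ Subt s r)

/-- Terms over the signature extended by a fresh constant `[s]` for every
curried term `s` (only those with `s` a subterm of `R°` are ever used). -/
abbrev XTerm (F : Type) : Type := CTerm (F ⊕ CTerm F)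

/-- The inverse of a TRS. -/
def inv {α : Type} (S : Set (α × α)) : Set (α × α) := { p | (p.2, p.1) ∈ S }

/-- The embedding of curried terms into the extended signature. -/
def emb {F : Type} : CTerm F → XTerm F
  | .const c => .const (Sum.inl c)
  | .app s t => .app (emb s) (emb t)

/-- The TRS `R°` over the extended signature. -/
def Remb {F : Type} (R : Set (CTerm F × CTerm F)) : Set (XTerm F × XTerm F) :=
  { p | ∃ l r, (l, r) ∈ R ∧ p = (emb l, emb r) }

/-- The flattening system `E`: rules `c → [c]` and `[s₁] ∘ [s₂] → [s₁ ∘ s₂]`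
for subterms of `R°`. -/
def Eflat {F : Type} (R : Set (CTerm F × CTerm F)) : Set (XTerm F × XTerm F) :=
  { p | (∃ c : F, SubR R (.const c) ∧
          p = (CTerm.const (Sum.inl c), CTerm.const (Sum.inr (CTerm.const c)))) ∨
        (∃ s₁ s₂ : CTerm F, SubR R (.app s₁ s₂) ∧
          p = (CTerm.app (CTerm.const (Sum.inr s₁)) (CTerm.const (Sum.inr s₂)),
               CTerm.const (Sum.inr (CTerm.app s₁ s₂)))) }

/-- The flattened TRS `R♭ = { [ℓ] → [r] : ℓ → r ∈ R° }`. -/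
def Rflat {F : Type} (R : Set (CTerm F × CTerm F)) : Set (XTerm F × XTerm F) :=
  { p | ∃ l r, (l, r) ∈ R ∧ p = (CTerm.const (Sum.inr l), CTerm.const (Sum.inr r)) }

/-- The rewrite closure
`F = { [p] → [q] : p, q subterms of R° and [p] →*_{R♭ ∪ E^±} [q] }`. -/
def Fcl {F : Type} (R : Set (CTerm F × CTerm F)) : Set (XTerm F × XTerm F) :=
  { pr | ∃ a b : CTerm F, SubR R a ∧ SubR R b ∧
      Relation.ReflTransGen (CRew (Rflat R ∪ Eflat R ∪ inv (Eflat R)))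
        (CTerm.const (Sum.inr a)) (CTerm.const (Sum.inr b)) ∧
      pr = (CTerm.const (Sum.inr a), CTerm.const (Sum.inr b)) }

/-- Confluence (Church-Rosser): convertible terms have a common reduct. -/
def Confl {α : Type} (S : Set (CTerm α × CTerm α)) : Prop :=
  ∀ s t, Relation.EqvGen (CRew S) s t →
    ∃ u, Relation.ReflTransGen (CRew S) s u ∧ Relation.ReflTransGen (CRew S) t u

section Aux

open Relation

variable {α β : Type}

/-! ### Generic rewriting lemmas -/

theorem crew_mono {S T : Set (CTerm α × CTerm α)} (h : S ⊆ T) :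
    ∀ {s t : CTerm α}, CRew S s t → CRew T s t := by
  intro s t hst
  induction hst with
  | rule h' => exact CRew.rule (h h')
  | appl _ ih => exact CRew.appl ih
  | appr _ ih => exact CRew.appr ih

theorem rtg_appl {S : Set (CTerm α × CTerm α)} {s t u : CTerm α}
    (h : ReflTransGen (CRew S) s t) :
    ReflTransGen (CRew S) (.app s u) (.app t u) := by
  induction h with
  | refl => exact .refl
  | tail _ h' ih => exact ih.tail (CRew.appl h')

theorem rtg_appr {S : Set (CTerm α × CTerm α)} {s t u : CTerm α}
    (h : ReflTransGen (CRew S) s t) :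
    ReflTransGen (CRew S) (.app u s) (.app u t) := by
  induction h with
  | refl => exact .refl
  | tail _ h' ih => exact ih.tail (CRew.appr h')

theorem rtg_app {S : Set (CTerm α × CTerm α)} {s t u v : CTerm α}
    (h1 : ReflTransGen (CRew S) s t) (h2 : ReflTransGen (CRew S) u v) :
    ReflTransGen (CRew S) (.app s u) (.app t v) :=
  (rtg_appl h1).trans (rtg_appr h2)

theorem rtg_bind {r : α → α → Prop} {q : β → β → Prop} (f : α → β)
    (hf : ∀ a b, r a b → ReflTransGen q (f a) (f b)) {a b : α}
    (h : ReflTransGen r a b) : ReflTransGen q (f a) (f b) := by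
  induction h with
  | refl => exact .refl
  | tail _ h' ih => exact ih.trans (hf _ _ h')

theorem rtg_eqv {r : α → α → Prop} {a b : α} (h : ReflTransGen r a b) :
    EqvGen r a b := by
  induction h with
  | refl => exact .refl _
  | tail _ h' ih => exact ih.trans _ _ _ (.rel _ _ h')

theorem eqv_bind {r : α → α → Prop} {q : β → β → Prop} (f : α → β)
    (hf : ∀ a b, r a b → EqvGen q (f a) (f b)) {a b : α}
    (h : EqvGen r a b) : EqvGen q (f a) (f b) := by
  induction h with
  | rel a b h => exact hf a b h
  | refl a => exact .refl _
  | symm a b _ ih => exact EqvGen.symm _ _ ih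
  | trans a b c _ _ ih1 ih2 => exact EqvGen.trans _ _ _ ih1 ih2

/-! ### Subterm lemmas -/

theorem Subt.trans' {s t u : CTerm α} (h1 : Subt s t) (h2 : Subt t u) : Subt s u := by
  induction h2 with
  | refl => exact h1
  | appl _ ih => exact Subt.appl ih
  | appr _ ih => exact Subt.appr ih

theorem SubR.of_subt {R : Set (CTerm α × CTerm α)} {s t : CTerm α}
    (h : SubR R t) (hst : Subt s t) : SubR R s := by
  obtain ⟨l, r, hlr, h'⟩ := h
  exact ⟨l, r, hlr, h'.imp (fun hh => hst.trans' hh) (fun hh => hst.trans' hh)⟩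

theorem SubR.left {R : Set (CTerm α × CTerm α)} {s t : CTerm α}
    (h : SubR R (.app s t)) : SubR R s :=
  h.of_subt (Subt.appl (Subt.refl s))

theorem SubR.right {R : Set (CTerm α × CTerm α)} {s t : CTerm α}
    (h : SubR R (.app s t)) : SubR R t :=
  h.of_subt (Subt.appr (Subt.refl t))

end Aux

section Main

open Relation

variable {F : Type}

/-- Abbreviation for `R♭ ∪ E ∪ E⁻`. -/
def S1 (R : Set (CTerm F × CTerm F)) : Set (XTerm F × XTerm F) :=
  Rflat R ∪ Eflat R ∪ inv (Eflat R)

/-- Abbreviation for `F ∪ E^±`. -/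
def BB (R : Set (CTerm F × CTerm F)) : Set (XTerm F × XTerm F) :=
  Fcl R ∪ (Eflat R ∪ inv (Eflat R))

/-! ### Unflattening -/

/-- Unflattening map. -/
def unflat : XTerm F → CTerm F
  | .const (.inl c) => .const c
  | .const (.inr s) => s
  | .app a b => .app (unflat a) (unflat b)

@[simp] theorem unflat_emb (s : CTerm F) : unflat (emb s) = s := by
  induction s with
  | const c => rfl
  | app a b ih1 ih2 => simp [emb, unflat, ih1, ih2]

/-- Does an extended term contain a flattening constant? -/
def hasAlien : XTerm F → Prop
  | .const (.inl _) => False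
  | .const (.inr _) => True
  | .app a b => hasAlien a ∨ hasAlien b

theorem not_hasAlien_emb (s : CTerm F) : ¬ hasAlien (emb s) := by
  induction s with
  | const c => simp [emb, hasAlien]
  | app a b ih1 ih2 => simp [emb, hasAlien]; exact ⟨ih1, ih2⟩

theorem emb_unflat {u : XTerm F} (h : ¬ hasAlien u) : emb (unflat u) = u := by
  induction u with
  | const x =>
    cases x with
    | inl c => rfl
    | inr s => exact absurd trivial h
  | app a b ih1 ih2 =>
    simp [hasAlien] at h
    simp [unflat, emb, ih1 h.1, ih2 h.2]

/-! ### Full expansion (E⁻-normal form) -/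

open Classical in
/-- Fully expand all flattening constants `[s]` with `s` a subterm of `R`. -/
noncomputable def expd (R : Set (CTerm F × CTerm F)) : XTerm F → XTerm F
  | .const (.inl c) => .const (.inl c)
  | .const (.inr s) => if SubR R s then emb s else .const (.inr s)
  | .app a b => .app (expd R a) (expd R b)

theorem expd_flat {R : Set (CTerm F × CTerm F)} {s : CTerm F} (h : SubR R s) :
    expd R (.const (.inr s)) = emb s := by
  simp [expd, h]

/-! ### Flattening and unflattening reductions in `S1` -/

theorem emb_to_flat {R : Set (CTerm F × CTerm F)} {s : CTerm F} (h : SubR R s) :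
    ReflTransGen (CRew (S1 R)) (emb s) (.const (.inr s)) := by
  induction s with
  | const c =>
    exact ReflTransGen.single (CRew.rule (Or.inl (Or.inr (Or.inl ⟨c, h, rfl⟩))))
  | app s1 s2 ih1 ih2 =>
    exact (rtg_app (ih1 h.left) (ih2 h.right)).tail
      (CRew.rule (Or.inl (Or.inr (Or.inr ⟨s1, s2, h, rfl⟩))))

theorem flat_to_emb {R : Set (CTerm F × CTerm F)} {s : CTerm F} (h : SubR R s) :
    ReflTransGen (CRew (S1 R)) (.const (.inr s)) (emb s) := by
  induction s with
  | const c =>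
    exact ReflTransGen.single (CRew.rule (Or.inr (Or.inl ⟨c, h, rfl⟩)))
  | app s1 s2 ih1 ih2 =>
    exact (ReflTransGen.single
      (CRew.rule (Or.inr (Or.inr ⟨s1, s2, h, rfl⟩)))).trans
      (rtg_app (ih1 h.left) (ih2 h.right))

theorem to_expd (R : Set (CTerm F × CTerm F)) (u : XTerm F) :
    ReflTransGen (CRew (S1 R)) u (expd R u) := by
  induction u with
  | const x =>
    cases x with
    | inl c => exact .refl
    | inr s =>
      by_cases h : SubR R s
      · rw [expd_flat h]; exact flat_to_emb h
      · simp only [expd, if_neg h]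
        exact .refl
  | app a b ih1 ih2 => exact rtg_app ih1 ih2

/-! ### Projections between the systems -/

theorem expd_step {R : Set (CTerm F × CTerm F)} {a b : XTerm F}
    (h : CRew (S1 R) a b) :
    expd R a = expd R b ∨ CRew (Remb R) (expd R a) (expd R b) := by
  induction h with
  | rule hr =>
    rcases hr with (hr | he) | hi
    · obtain ⟨l, r, hlr, heq⟩ := hr
      injection heq with h1 h2; subst h1; subst h2
      rw [expd_flat ⟨l, r, hlr, Or.inl (Subt.refl l)⟩,
          expd_flat ⟨l, r, hlr, Or.inr (Subt.refl r)⟩]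
      exact Or.inr (CRew.rule ⟨l, r, hlr, rfl⟩)
    · rcases he with ⟨c, hc, heq⟩ | ⟨s1, s2, hs, heq⟩
      · injection heq with h1 h2; subst h1; subst h2
        left; rw [expd_flat hc]; rfl
      · injection heq with h1 h2; subst h1; subst h2
        left
        show CTerm.app (expd R (.const (.inr s1))) (expd R (.const (.inr s2))) = _
        rw [expd_flat hs.left, expd_flat hs.right, expd_flat hs]
        rfl
    · rename_i l r
      rcases hi with ⟨c, hc, heq⟩ | ⟨s1, s2, hs, heq⟩
      · have heq' : (r, l) = (CTerm.const (.inl c),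
            CTerm.const (.inr (CTerm.const c))) := heq
        injection heq' with h1 h2; subst h1; subst h2
        left; rw [expd_flat hc]; rfl
      · have heq' : (r, l) = (CTerm.app (.const (.inr s1)) (.const (.inr s2)),
            CTerm.const (.inr (CTerm.app s1 s2))) := heq
        injection heq' with h1 h2; subst h1; subst h2
        left
        rw [expd_flat hs]
        show _ = CTerm.app (expd R (.const (.inr s1))) (expd R (.const (.inr s2)))
        rw [expd_flat hs.left, expd_flat hs.right]
        rfl
  | appl _ ih =>
    rcases ih with h' | h'
    · left; show CTerm.app _ _ = CTerm.app _ _; rw [h']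
    · right; exact CRew.appl h'
  | appr _ ih =>
    rcases ih with h' | h'
    · left; show CTerm.app _ _ = CTerm.app _ _; rw [h']
    · right; exact CRew.appr h'

theorem remb_step_rtg {R : Set (CTerm F × CTerm F)} {a b : XTerm F}
    (h : CRew (Remb R) a b) : ReflTransGen (CRew (S1 R)) a b := by
  induction h with
  | rule hr =>
    obtain ⟨l, r, hlr, heq⟩ := hr
    injection heq with h1 h2; subst h1; subst h2
    exact ((emb_to_flat ⟨l, r, hlr, Or.inl (Subt.refl l)⟩).tail
      (CRew.rule (Or.inl (Or.inl ⟨l, r, hlr, rfl⟩)))).trans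
      (flat_to_emb ⟨l, r, hlr, Or.inr (Subt.refl r)⟩)
  | appl _ ih => exact rtg_appl ih
  | appr _ ih => exact rtg_appr ih

theorem crew_R_to_Remb {R : Set (CTerm F × CTerm F)} {a b : CTerm F}
    (h : CRew R a b) : CRew (Remb R) (emb a) (emb b) := by
  induction h with
  | rule h' => exact CRew.rule ⟨_, _, h', rfl⟩
  | appl _ ih => exact CRew.appl ih
  | appr _ ih => exact CRew.appr ih

theorem crew_Remb_to_R {R : Set (CTerm F × CTerm F)} {a b : XTerm F}
    (h : CRew (Remb R) a b) : CRew R (unflat a) (unflat b) := by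
  induction h with
  | rule hr =>
    obtain ⟨l, r, hlr, heq⟩ := hr
    injection heq with h1 h2; subst h1; subst h2
    rw [unflat_emb, unflat_emb]
    exact CRew.rule hlr
  | appl _ ih => exact CRew.appl ih
  | appr _ ih => exact CRew.appr ih

theorem unflat_S1_step {R : Set (CTerm F × CTerm F)} {a b : XTerm F}
    (h : CRew (S1 R) a b) : ReflTransGen (CRew R) (unflat a) (unflat b) := by
  induction h with
  | rule hr =>
    rcases hr with (hr | he) | hi
    · obtain ⟨l, r, hlr, heq⟩ := hr
      injection heq with h1 h2; subst h1; subst h2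
      exact ReflTransGen.single (CRew.rule hlr)
    · rcases he with ⟨c, _, heq⟩ | ⟨s1, s2, _, heq⟩
      · injection heq with h1 h2; subst h1; subst h2; exact .refl
      · injection heq with h1 h2; subst h1; subst h2; exact .refl
    · rename_i l r
      rcases hi with ⟨c, _, heq⟩ | ⟨s1, s2, _, heq⟩
      · have heq' : (r, l) = (CTerm.const (.inl c),
            CTerm.const (.inr (CTerm.const c))) := heq
        injection heq' with h1 h2; subst h1; subst h2; exact .refl
      · have heq' : (r, l) = (CTerm.app (.const (.inr s1)) (.const (.inr s2)),
            CTerm.const (.inr (CTerm.app s1 s2))) := heq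
        injection heq' with h1 h2; subst h1; subst h2; exact .refl
  | appl _ ih => exact rtg_appl ih
  | appr _ ih => exact rtg_appr ih

/-! ### Relating `BB` and `S1` -/

theorem crew_BB_rtg_S1 {R : Set (CTerm F × CTerm F)} {a b : XTerm F}
    (h : CRew (BB R) a b) : ReflTransGen (CRew (S1 R)) a b := by
  induction h with
  | rule hr =>
    rcases hr with hf | he
    · obtain ⟨p, q, _, _, hchain, heq⟩ := hf
      injection heq with h1 h2; subst h1; subst h2
      exact hchain
    · exact ReflTransGen.single (CRew.rule (he.imp (fun h => Or.inr h) id))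
  | appl _ ih => exact rtg_appl ih
  | appr _ ih => exact rtg_appr ih

theorem S1_sub_BB {R : Set (CTerm F × CTerm F)} : S1 R ⊆ BB R := by
  rintro p ((hr | he) | hi)
  · obtain ⟨l, r, hlr, heq⟩ := hr
    exact Or.inl ⟨l, r, ⟨l, r, hlr, Or.inl (Subt.refl l)⟩,
      ⟨l, r, hlr, Or.inr (Subt.refl r)⟩,
      ReflTransGen.single (CRew.rule (Or.inl (Or.inl ⟨l, r, hlr, rfl⟩))), heq⟩
  · exact Or.inr (Or.inl he)
  · exact Or.inr (Or.inr hi)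

theorem unflat_BB_step {R : Set (CTerm F × CTerm F)} {a b : XTerm F}
    (h : CRew (BB R) a b) : ReflTransGen (CRew R) (unflat a) (unflat b) := by
  induction h with
  | rule hr =>
    rcases hr with hf | he
    · obtain ⟨p, q, _, _, hchain, heq⟩ := hf
      injection heq with h1 h2; subst h1; subst h2
      exact rtg_bind unflat (fun x y hxy => unflat_S1_step hxy) hchain
    · exact unflat_S1_step (CRew.rule (he.imp (fun h => Or.inr h) id))
  | appl _ ih => exact rtg_appl ih
  | appr _ ih => exact rtg_appr ih

/-! ### Aliens are frozen for `Remb` -/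

theorem hasAlien_step {R : Set (CTerm F × CTerm F)} {a b : XTerm F}
    (h : CRew (Remb R) a b) : hasAlien a ↔ hasAlien b := by
  induction h with
  | rule hr =>
    obtain ⟨l, r, hlr, heq⟩ := hr
    injection heq with h1 h2; subst h1; subst h2
    exact iff_of_false (not_hasAlien_emb l) (not_hasAlien_emb r)
  | appl _ ih => exact or_congr ih Iff.rfl
  | appr _ ih => exact or_congr Iff.rfl ih

theorem hasAlien_eqv {R : Set (CTerm F × CTerm F)} {a b : XTerm F}
    (h : EqvGen (CRew (Remb R)) a b) : hasAlien a ↔ hasAlien b := by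
  induction h with
  | rel _ _ h => exact hasAlien_step h
  | refl _ => exact Iff.rfl
  | symm _ _ _ ih => exact ih.symm
  | trans _ _ _ _ _ ih1 ih2 => exact ih1.trans ih2

theorem emb_ne_flat (t : CTerm F) (s : CTerm F) :
    emb t ≠ CTerm.const (.inr s) := by
  cases t with
  | const c => simp [emb]
  | app a b => simp [emb]

theorem no_step_from_flat {R : Set (CTerm F × CTerm F)} {s : CTerm F} {b : XTerm F}
    (h : CRew (Remb R) (.const (.inr s)) b) : False := by
  cases h with
  | rule hr =>
    obtain ⟨l, r, _, heq⟩ := hr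
    have h1 : CTerm.const (.inr s) = emb l := congrArg Prod.fst heq
    exact emb_ne_flat l s h1.symm

theorem no_step_to_flat {R : Set (CTerm F × CTerm F)} {s : CTerm F} {a : XTerm F}
    (h : CRew (Remb R) a (.const (.inr s))) : False := by
  cases h with
  | rule hr =>
    obtain ⟨l, r, _, heq⟩ := hr
    have h1 : CTerm.const (.inr s) = emb r := congrArg Prod.snd heq
    exact emb_ne_flat r s h1.symm

theorem eqv_frozen {R : Set (CTerm F × CTerm F)} {a b : XTerm F}
    (h : EqvGen (CRew (Remb R)) a b) :
    ∀ s : CTerm F, (a = .const (.inr s) → b = .const (.inr s)) ∧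
      (b = .const (.inr s) → a = .const (.inr s)) := by
  induction h with
  | rel x y hxy =>
    intro s
    constructor
    · rintro rfl; exact absurd hxy no_step_from_flat
    · rintro rfl; exact absurd hxy no_step_to_flat
  | refl _ => exact fun s => ⟨id, id⟩
  | symm _ _ _ ih => exact fun s => ⟨(ih s).2, (ih s).1⟩
  | trans _ _ _ _ _ ih1 ih2 =>
    exact fun s => ⟨fun h => (ih2 s).1 ((ih1 s).1 h), fun h => (ih1 s).2 ((ih2 s).2 h)⟩

theorem eqv_decomp {R : Set (CTerm F × CTerm F)} {u v : XTerm F}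
    (h : EqvGen (CRew (Remb R)) u v) :
    hasAlien u → ∀ u1 u2, u = .app u1 u2 →
      ∃ v1 v2, v = .app v1 v2 ∧ EqvGen (CRew (Remb R)) u1 v1 ∧
        EqvGen (CRew (Remb R)) u2 v2 := by
  induction h with
  | rel x y hxy =>
    intro hal u1 u2 hu
    subst hu
    cases hxy with
    | rule hr =>
      obtain ⟨l, r, _, heq⟩ := hr
      have h1 : CTerm.app u1 u2 = emb l := congrArg Prod.fst heq
      exact absurd (h1 ▸ hal) (not_hasAlien_emb l)
    | @appl s t u hst => exact ⟨t, u2, rfl, EqvGen.rel _ _ hst, EqvGen.refl _⟩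
    | @appr s t u hst => exact ⟨u1, t, rfl, EqvGen.refl _, EqvGen.rel _ _ hst⟩
  | refl x =>
    intro _ u1 u2 hu
    exact ⟨u1, u2, hu, EqvGen.refl _, EqvGen.refl _⟩
  | symm x y hxy ih =>
    intro hal u1 u2 hu
    -- here the goal is about (y, x): given y = app u1 u2, decompose x
    have halx : hasAlien x := (hasAlien_eqv hxy).mpr hal
    cases x with
    | const c =>
      cases c with
      | inl c => exact absurd halx (by simp [hasAlien])
      | inr s =>
        have := ((eqv_frozen hxy s).1 rfl)
        rw [hu] at this
        exact absurd this (by simp)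
    | app x1 x2 =>
      obtain ⟨y1, y2, hy, h1, h2⟩ := ih halx x1 x2 rfl
      rw [hu] at hy
      injection hy with hy1 hy2
      subst hy1; subst hy2
      exact ⟨x1, x2, rfl, EqvGen.symm _ _ h1, EqvGen.symm _ _ h2⟩
  | trans x y z hxy hyz ih1 ih2 =>
    intro hal u1 u2 hu
    obtain ⟨y1, y2, hy, h1, h2⟩ := ih1 hal u1 u2 hu
    have haly : hasAlien y := (hasAlien_eqv hxy).mp hal
    obtain ⟨z1, z2, hz, h1', h2'⟩ := ih2 haly y1 y2 hy
    exact ⟨z1, z2, hz, EqvGen.trans _ _ _ h1 h1', EqvGen.trans _ _ _ h2 h2'⟩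

/-! ### Persistence: confluence of `R` lifts to `Remb R` on extended terms -/

theorem remb_confluent {R : Set (CTerm F × CTerm F)} (hR : Confl R) :
    ∀ u v : XTerm F, EqvGen (CRew (Remb R)) u v →
      ∃ w, ReflTransGen (CRew (Remb R)) u w ∧ ReflTransGen (CRew (Remb R)) v w := by
  intro u
  induction u with
  | const c =>
    intro v h
    cases c with
    | inl c =>
      -- alien-free case specialized to a constant: no aliens in u
      have hal : ¬ hasAlien (CTerm.const (Sum.inl c) : XTerm F) := by simp [hasAlien]
      have halv : ¬ hasAlien v := fun hv => hal ((hasAlien_eqv h).mpr hv)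
      have hproj : EqvGen (CRew R) (unflat (.const (.inl c))) (unflat v) :=
        eqv_bind unflat (fun a b hab => EqvGen.rel _ _ (crew_Remb_to_R hab)) h
      obtain ⟨w, hw1, hw2⟩ := hR _ _ hproj
      refine ⟨emb w, ?_, ?_⟩
      · have := rtg_bind emb (fun a b hab =>
          ReflTransGen.single (crew_R_to_Remb hab)) hw1
        exact this
      · have := rtg_bind emb (fun a b hab =>
          ReflTransGen.single (crew_R_to_Remb hab)) hw2
        rwa [emb_unflat halv] at this
    | inr s =>
      have := (eqv_frozen h s).1 rfl
      subst this
      exact ⟨_, .refl, .refl⟩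
  | app u1 u2 ih1 ih2 =>
    intro v h
    by_cases hal : hasAlien (CTerm.app u1 u2)
    · obtain ⟨v1, v2, hv, h1, h2⟩ := eqv_decomp h hal u1 u2 rfl
      subst hv
      obtain ⟨w1, hw11, hw12⟩ := ih1 v1 h1
      obtain ⟨w2, hw21, hw22⟩ := ih2 v2 h2
      exact ⟨.app w1 w2, rtg_app hw11 hw21, rtg_app hw12 hw22⟩
    · have halv : ¬ hasAlien v := fun hv => hal ((hasAlien_eqv h).mpr hv)
      have hproj : EqvGen (CRew R) (unflat (.app u1 u2)) (unflat v) :=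
        eqv_bind unflat (fun a b hab => EqvGen.rel _ _ (crew_Remb_to_R hab)) h
      obtain ⟨w, hw1, hw2⟩ := hR _ _ hproj
      refine ⟨emb w, ?_, ?_⟩
      · have := rtg_bind emb (fun a b hab =>
          ReflTransGen.single (crew_R_to_Remb hab)) hw1
        rwa [emb_unflat hal] at this
      · have := rtg_bind emb (fun a b hab =>
          ReflTransGen.single (crew_R_to_Remb hab)) hw2
        rwa [emb_unflat halv] at this

end Main

/-- The curried TRS `R°` is confluent iff `F ∪ E^±` is confluent. -/
theorem confluence_iff_rewrite_closure_confluent {F : Type}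
    (R : Set (CTerm F × CTerm F)) :
    Confl R ↔ Confl (Fcl R ∪ (Eflat R ∪ inv (Eflat R))) := by
  constructor
  · intro hR
    intro s t h
    have h1 : Relation.EqvGen (CRew (S1 R)) s t :=
      eqv_bind (fun x => x)
        (fun a b hab => rtg_eqv (crew_BB_rtg_S1 (R := R) hab)) h
    have h2 : Relation.EqvGen (CRew (Remb R)) (expd R s) (expd R t) :=
      eqv_bind (expd R)
        (fun a b hab => by
          rcases expd_step hab with h' | h'
          · exact h' ▸ Relation.EqvGen.refl _
          · exact Relation.EqvGen.rel _ _ h') h1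
    obtain ⟨w, hw1, hw2⟩ := remb_confluent hR _ _ h2
    have lift : ∀ {x y : XTerm F}, Relation.ReflTransGen (CRew (Remb R)) x y →
        Relation.ReflTransGen (CRew (S1 R)) x y :=
      fun h => rtg_bind (fun x => x) (fun a b hab => remb_step_rtg hab) h
    have hs : Relation.ReflTransGen (CRew (S1 R)) s w := (to_expd R s).trans (lift hw1)
    have ht : Relation.ReflTransGen (CRew (S1 R)) t w := (to_expd R t).trans (lift hw2)
    have toBB : ∀ {x y : XTerm F}, Relation.ReflTransGen (CRew (S1 R)) x y →
        Relation.ReflTransGen (CRew (BB R)) x y :=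
      fun h => rtg_bind (fun x => x)
        (fun a b hab => Relation.ReflTransGen.single (crew_mono S1_sub_BB hab)) h
    exact ⟨w, toBB hs, toBB ht⟩
  · intro hB
    intro s t h
    have h1 : Relation.EqvGen (CRew (BB R)) (emb s) (emb t) :=
      eqv_bind emb
        (fun a b hab => rtg_eqv (rtg_bind (fun x => x)
          (fun x y hxy =>
            Relation.ReflTransGen.single (crew_mono S1_sub_BB hxy))
          (remb_step_rtg (crew_R_to_Remb hab)))) h
    obtain ⟨w, hw1, hw2⟩ := hB _ _ h1
    refine ⟨unflat w, ?_, ?_⟩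
    · have := rtg_bind unflat (fun a b hab => unflat_BB_step hab) hw1
      rwa [unflat_emb] at this
    · have := rtg_bind unflat (fun a b hab => unflat_BB_step hab) hw2
      rwa [unflat_emb] at this
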